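/- arXiv:1505.02735 — 4 statements merged into one kernel-verified Lean document; each statement's English description precedes it below -/
import Mathlib

section
/- Let S be a nonempty set, k : S × ℝ → ℝ and h : ℝ → ℝ. Suppose there exist constants a1 > 0 and a2 > 0 such that k(q,z)² ≤ a1·h(z)·z + a2·(1 + z²) for all q ∈ S and all z ∈ ℝ. Then there exists a constant d0 > 0 such that (k(q,z) − h(z))·z ≤ d0·(1 + z²) for all q ∈ S and all z ∈ ℝ. -/
/-- Lemma 3.4 (rel.h-F): the structural condition (M3)(i) on the decomposition F = k − h
implies the one-sided quadratic growth (k(q,z) − h(z))·z ≤ d0 (1 + z²). -/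
theorem onesided_growth_of_M3i
    {S : Type*} [Nonempty S] (k : S × ℝ → ℝ) (h : ℝ → ℝ)
    (a1 a2 : ℝ) (ha1 : 0 < a1) (ha2 : 0 < a2)
    (hM3i : ∀ (q : S) (z : ℝ), (k (q, z)) ^ 2 ≤ a1 * h z * z + a2 * (1 + z ^ 2)) :
    ∃ d0 : ℝ, 0 < d0 ∧ ∀ (q : S) (z : ℝ), (k (q, z) - h z) * z ≤ d0 * (1 + z ^ 2) := by
  refine ⟨a1 / 4 + a2 / a1, by positivity, fun q z => ?_⟩
  have H := hM3i q z
  have hc : a2 / a1 * a1 = a2 := div_mul_cancel₀ _ ha1.ne'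
  nlinarith [sq_nonneg (k (q, z) - a1 * z / 2), sq_nonneg z, mul_pos ha1 ha2,
    sq_nonneg (1 + z ^ 2)]
end

section
/- Let s be a real number with s ≥ 1. Then for all z1, z2 ∈ ℝ one has | |z1|^(s−1)·z1 − |z2|^(s−1)·z2 | ≤ s·(|z1| + |z2|)^(s−1)·|z1 − z2|. -/
/-! With `p = s - 1`, the map `z ↦ |z| ^ p * z` is differentiable everywhere with derivative
`(p + 1) * |z| ^ p`; at `z = 0` its difference quotient is `|z| ^ p → 0` when `p > 0`, and it is the
identity when `p = 0`. On the ball of radius `|z₁| + |z₂|`, which contains both points, this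
derivative is at most `s * (|z₁| + |z₂|) ^ (s - 1)`, and the mean value inequality concludes. -/

open Real Metric Filter Topology

theorem hasDerivAt_abs_rpow_mul_self_of_ne_zero (p : ℝ) {x : ℝ} (hx : x ≠ 0) :
    HasDerivAt (fun z : ℝ => |z| ^ p * z) ((p + 1) * |x| ^ p) x := by
  have hprod := ((hasDerivAt_abs hx).rpow_const (p := p) (Or.inl (abs_ne_zero.2 hx))).mul
    (hasDerivAt_id x)
  have hpow : |x| ^ (p - 1) * |x| = |x| ^ p := by
    rw [← rpow_add_one (abs_ne_zero.2 hx), sub_add_cancel]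
  refine hprod.congr_deriv ?_
  calc (SignType.sign x : ℝ) * p * |x| ^ (p - 1) * id x + |x| ^ p * 1
      = p * (|x| ^ (p - 1) * ((SignType.sign x : ℝ) * x)) + |x| ^ p := by simp only [id]; ring
    _ = (p + 1) * |x| ^ p := by rw [sign_mul_self, hpow]; ring

theorem hasDerivAt_abs_rpow_mul_self_zero {p : ℝ} (hp : 0 < p) :
    HasDerivAt (fun z : ℝ => |z| ^ p * z) 0 0 := by
  rw [hasDerivAt_iff_tendsto_slope_zero]
  have hlim : Tendsto (fun t : ℝ => |t| ^ p) (𝓝[≠] 0) (𝓝 0) := by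
    have := (continuous_abs.rpow_const fun _ => Or.inr hp.le).tendsto (0 : ℝ)
    simpa [zero_rpow hp.ne'] using this.mono_left nhdsWithin_le_nhds
  refine hlim.congr' ?_
  filter_upwards [self_mem_nhdsWithin] with t (ht : t ≠ 0)
  simp only [zero_add, abs_zero, zero_rpow hp.ne', mul_zero, sub_zero, smul_eq_mul]
  field_simp

theorem hasDerivAt_abs_rpow_mul_self {p : ℝ} (hp : 0 ≤ p) (x : ℝ) :
    HasDerivAt (fun z : ℝ => |z| ^ p * z) ((p + 1) * |x| ^ p) x := by
  rcases eq_or_ne x 0 with rfl | hx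
  · rcases hp.lt_or_eq with hp | rfl
    · simpa [zero_rpow hp.ne'] using hasDerivAt_abs_rpow_mul_self_zero hp
    · simpa using hasDerivAt_id' (0 : ℝ)
  · exact hasDerivAt_abs_rpow_mul_self_of_ne_zero p hx

theorem abs_rpow_mul_self_sub_le {p r : ℝ} (hp : 0 ≤ p) {x y : ℝ} (hx : |x| ≤ r) (hy : |y| ≤ r) :
    |(|x| ^ p * x - |y| ^ p * y)| ≤ (p + 1) * r ^ p * |x - y| := by
  have hbound : ∀ u ∈ closedBall (0 : ℝ) r, ‖(p + 1) * |u| ^ p‖ ≤ (p + 1) * r ^ p := by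
    intro u hu
    rw [mem_closedBall_zero_iff, norm_eq_abs] at hu
    rw [norm_mul, norm_eq_abs, norm_eq_abs, abs_of_pos (by linarith),
      abs_of_nonneg (by positivity)]
    gcongr
  exact (convex_closedBall 0 r).norm_image_sub_le_of_norm_hasDerivWithin_le
    (fun u _ => (hasDerivAt_abs_rpow_mul_self hp u).hasDerivWithinAt) hbound
    (mem_closedBall_zero_iff.2 hy) (mem_closedBall_zero_iff.2 hx)

/-- Mean value theorem estimate for the odd power function z ↦ |z|^{s−1} z, s ≥ 1. -/
theorem odd_power_mvt_estimate
    (s : ℝ) (hs : 1 ≤ s) (z1 z2 : ℝ) :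
    |(|z1| ^ (s - 1) * z1 - |z2| ^ (s - 1) * z2)| ≤
      s * (|z1| + |z2|) ^ (s - 1) * |z1 - z2| := by
  have h := abs_rpow_mul_self_sub_le (sub_nonneg.2 hs)
    (le_add_of_nonneg_right (abs_nonneg z2) : |z1| ≤ |z1| + |z2|)
    (le_add_of_nonneg_left (abs_nonneg z1))
  rwa [sub_add_cancel] at h
end

section
/- Let r1, r2 be real numbers with 1 ≤ r2 < r1, and define F : ℝ → ℝ by F(z) = |z|^(r2−1)·z − |z|^(r1−1)·z. Then there exists a constant a0 > 0 such that (F(z1) − F(z2))·(z1 − z2) ≤ a0·(z1 − z2)² for all z1, z2 ∈ ℝ. -/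
open Set

/-- Auxiliary: the function r2*z - z^r2 + z^r1 (rpow form) is monotone on [0,∞). -/
lemma aux_mono_Ici (r1 r2 : ℝ) (h1 : 1 ≤ r2) (h2 : r2 < r1) :
    MonotoneOn (fun z : ℝ => r2 * z - z ^ r2 + z ^ r1) (Ici (0:ℝ)) := by
  have hr2 : (0:ℝ) ≤ r2 := by linarith
  have hr1 : (0:ℝ) ≤ r1 := by linarith
  apply monotoneOn_of_deriv_nonneg (convex_Ici 0)
  · apply ContinuousOn.add
    · apply ContinuousOn.sub (continuousOn_const.mul continuousOn_id)
      exact fun x hx => (Real.continuousAt_rpow_const x r2 (Or.inr hr2)).continuousWithinAt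
    · exact fun x hx => (Real.continuousAt_rpow_const x r1 (Or.inr hr1)).continuousWithinAt
  · intro x hx
    rw [interior_Ici] at hx
    have hx0 : x ≠ 0 := ne_of_gt hx
    exact (((hasDerivAt_id x).const_mul r2).sub
      (Real.hasDerivAt_rpow_const (Or.inl hx0))).add
      (Real.hasDerivAt_rpow_const (Or.inl hx0)) |>.differentiableAt.differentiableWithinAt
  · intro x hx
    rw [interior_Ici] at hx
    have hx0 : x ≠ 0 := ne_of_gt hx
    have hD : HasDerivAt (fun z : ℝ => r2 * z - z ^ r2 + z ^ r1)
        (r2 * 1 - r2 * x ^ (r2 - 1) + r1 * x ^ (r1 - 1)) x :=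
      (((hasDerivAt_id x).const_mul r2).sub
        (Real.hasDerivAt_rpow_const (Or.inl hx0))).add
        (Real.hasDerivAt_rpow_const (Or.inl hx0))
    rw [hD.deriv]
    have hxpos : 0 < x := hx
    rcases le_total x 1 with hle | hge
    · have h3 : x ^ (r2 - 1) ≤ 1 := Real.rpow_le_one hxpos.le hle (by linarith)
      have h4 : (0:ℝ) ≤ x ^ (r1 - 1) := Real.rpow_nonneg hxpos.le _
      nlinarith
    · have h3 : x ^ (r2 - 1) ≤ x ^ (r1 - 1) :=
        Real.rpow_le_rpow_of_exponent_le hge (by linarith)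
      have h4 : (0:ℝ) ≤ x ^ (r2 - 1) := Real.rpow_nonneg hxpos.le _
      nlinarith

/-- Example 3.1: the nonlinearity F(z) = |z|^{r2−1} z − |z|^{r1−1} z satisfies the
one-sided Lipschitz hypothesis (H1). -/
theorem example_satisfies_H1
    (r1 r2 : ℝ) (h1 : 1 ≤ r2) (h2 : r2 < r1)
    (F : ℝ → ℝ) (hF : ∀ z : ℝ, F z = |z| ^ (r2 - 1) * z - |z| ^ (r1 - 1) * z) :
    ∃ a0 : ℝ, 0 < a0 ∧ ∀ z1 z2 : ℝ,
      (F z1 - F z2) * (z1 - z2) ≤ a0 * (z1 - z2) ^ 2 := by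
  set g : ℝ → ℝ := fun z => r2 * z - |z| ^ (r2 - 1) * z + |z| ^ (r1 - 1) * z with hg
  -- on Ici 0, g agrees with the rpow form
  have hagree : ∀ z : ℝ, 0 ≤ z → g z = r2 * z - z ^ r2 + z ^ r1 := by
    intro z hz
    rcases eq_or_lt_of_le hz with rfl | hz'
    · simp [hg, Real.zero_rpow (by linarith : r2 ≠ 0), Real.zero_rpow (by linarith : r1 ≠ 0)]
    · have hz0 : z ≠ 0 := ne_of_gt hz'
      have e2 : z ^ (r2 - 1) * z = z ^ r2 := by
        rw [← Real.rpow_add_one hz0]; ring_nf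
      have e3 : z ^ (r1 - 1) * z = z ^ r1 := by
        rw [← Real.rpow_add_one hz0]; ring_nf
      rw [hg]
      simp only [abs_of_pos hz', e2, e3]
  have hmonoIci : MonotoneOn g (Ici (0:ℝ)) := by
    intro a ha b hb hab
    rw [hagree a ha, hagree b hb]
    exact aux_mono_Ici r1 r2 h1 h2 ha hb hab
  have hodd : ∀ z : ℝ, g (-z) = - g z := by
    intro z; simp [hg, abs_neg]; ring
  have hmono : Monotone g := by
    intro x y hxy
    rcases le_total 0 x with hx | hx
    · exact hmonoIci hx (le_trans hx hxy) hxy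
    · rcases le_total y 0 with hy | hy
      · have := hmonoIci (neg_nonneg.mpr hy) (neg_nonneg.mpr hx) (neg_le_neg hxy)
        rw [hodd, hodd] at this; linarith
      · have hx0 : g x ≤ g 0 := by
          have := hmonoIci (le_refl (0:ℝ)) (neg_nonneg.mpr hx) (neg_nonneg.mpr hx)
          rw [hodd] at this
          have h00 : g (0:ℝ) = 0 := by simp [hg]
          linarith [h00 ▸ this]
        have h0y : g 0 ≤ g y := hmonoIci (le_refl (0:ℝ)) hy hy
        linarith
  refine ⟨r2, by linarith, fun z1 z2 => ?_⟩
  have key : 0 ≤ (g z1 - g z2) * (z1 - z2) := by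
    rcases le_total z1 z2 with h | h
    · have := hmono h
      nlinarith
    · have := hmono h
      nlinarith
  have e1 : g z1 - g z2 = r2 * (z1 - z2) - (F z1 - F z2) := by
    rw [hF, hF, hg]; ring
  rw [e1] at key
  nlinarith [key]
end

section
/- Let p, r, r1, r2 be real numbers with p > 2 and 1 ≤ r2 < r1 < r, and define F : ℝ → ℝ by F(z) = |z|^(r2−1)·z − |z|^(r1−1)·z. Then there do NOT exist constants α > 0 and β > 0 such that F(z)·|z|^(p·r−r−1)·z ≤ α·(1 + |z|^(p·r−1)) − β·|z|^(p·r) for all z ∈ ℝ. -/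
/-!
Divide both sides of the inequality by `z ^ (p * r)` and let `z → +∞`. For `z > 0` the left side
becomes `z ^ (r2 - r) - z ^ (r1 - r)`, which tends to `0` since `r2, r1 < r`, while the right side
becomes `α * z ^ (-(p * r)) + α * z ^ (-1) - β`, which tends to `-β < 0`.
-/

open Filter Topology Real

lemma tendsto_rpow_atTop_nhds_zero_of_neg {a : ℝ} (ha : a < 0) :
    Tendsto (fun x : ℝ => x ^ a) atTop (𝓝 0) := by
  simpa using tendsto_rpow_neg_atTop (neg_pos.mpr ha)

lemma abs_rpow_sub_one_mul_self {x : ℝ} (hx : 0 < x) (a : ℝ) : |x| ^ (a - 1) * x = x ^ a := by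
  rw [abs_of_pos hx, rpow_sub_one hx.ne', div_mul_cancel₀ _ hx.ne']

section

variable {a b c d : ℝ}

lemma tendsto_abs_rpow_sub_abs_rpow_mul_div_rpow_atTop (ha : a < d - c) (hb : b < d - c) :
    Tendsto (fun x : ℝ => (|x| ^ (a - 1) * x - |x| ^ (b - 1) * x) * |x| ^ (c - 1) * x / x ^ d)
      atTop (𝓝 0) := by
  have hlim : Tendsto (fun x : ℝ => x ^ (a + c - d) - x ^ (b + c - d)) atTop (𝓝 (0 - 0)) :=
    (tendsto_rpow_atTop_nhds_zero_of_neg (by linarith)).sub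
      (tendsto_rpow_atTop_nhds_zero_of_neg (by linarith))
  rw [sub_zero] at hlim
  refine hlim.congr' ((eventually_gt_atTop 0).mono fun x hx => ?_)
  simp only [abs_rpow_sub_one_mul_self hx, mul_assoc, sub_mul, sub_div,
    ← rpow_add hx, ← rpow_sub hx]

lemma tendsto_mul_one_add_abs_rpow_sub_mul_abs_rpow_div_rpow_atTop (hd : 0 < d) (α β : ℝ) :
    Tendsto (fun x : ℝ => (α * (1 + |x| ^ (d - 1)) - β * |x| ^ d) / x ^ d) atTop (𝓝 (-β)) := by
  have hlim : Tendsto (fun x : ℝ => α * x ^ (-d) + α * x ^ (-1 : ℝ) - β) atTop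
      (𝓝 (α * 0 + α * 0 - β)) :=
    (((tendsto_rpow_neg_atTop hd).const_mul α).add
      ((tendsto_rpow_neg_atTop one_pos).const_mul α)).sub_const β
  rw [mul_zero, add_zero, zero_sub] at hlim
  refine hlim.congr' ((eventually_gt_atTop 0).mono fun x hx => ?_)
  beta_reduce
  rw [abs_of_pos hx, rpow_neg hx.le, rpow_neg_one, rpow_sub_one hx.ne']
  field_simp

end

/-- Example 3.1: the nonlinearity F(z) = |z|^{r2−1} z − |z|^{r1−1} z, with
1 ≤ r2 < r1 < r and p > 2, does NOT satisfy the assumption (M4) of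
Moroşanu–Motreanu: there are no constants α, β > 0 with
F(z)·|z|^{pr−r−1}·z ≤ α(1 + |z|^{pr−1}) − β|z|^{pr} for all z. -/
theorem example_fails_M4
    (p r r1 r2 : ℝ) (hp : 2 < p) (h1 : 1 ≤ r2) (h2 : r2 < r1) (h3 : r1 < r)
    (F : ℝ → ℝ) (hF : ∀ z : ℝ, F z = |z| ^ (r2 - 1) * z - |z| ^ (r1 - 1) * z) :
    ¬ ∃ α β : ℝ, 0 < α ∧ 0 < β ∧ ∀ z : ℝ,
      F z * |z| ^ (p * r - r - 1) * z ≤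
        α * (1 + |z| ^ (p * r - 1)) - β * |z| ^ (p * r) := by
  rintro ⟨α, β, -, hβ, h⟩
  obtain rfl : F = _ := funext hF
  have hpr : 0 < p * r := mul_pos (by linarith) (by linarith)
  have hlim : (0 : ℝ) ≤ -β :=
    le_of_tendsto_of_tendsto
      (tendsto_abs_rpow_sub_abs_rpow_mul_div_rpow_atTop (c := p * r - r) (d := p * r)
        (by linarith) (by linarith))
      (tendsto_mul_one_add_abs_rpow_sub_mul_abs_rpow_div_rpow_atTop hpr α β)
      ((eventually_gt_atTop 0).mono fun z hz =>
        div_le_div_of_nonneg_right (h z) (rpow_nonneg hz.le _))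
  linarith
end
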